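/- For every real matrix V ∈ ℝ^{m×N} and every L > 0, the least common denominator satisfies D(V, L) ≥ 1/(2‖V‖_∞), where ‖V‖_∞ denotes the maximum Euclidean norm of the columns of V. -/
import Mathlib


noncomputable section

/-- The Euclidean norm of a finitely indexed vector with entries in `ℝ` or `ℂ`. -/
def eNorm {𝕜 : Type*} [RCLike 𝕜] {ι : Type*} [Fintype ι] (v : ι → 𝕜) : ℝ :=
  Real.sqrt (∑ i, ‖v i‖ ^ 2)

/-- `log₊ x = max (log x) 0`, the positive part of the natural logarithm. -/
def logPlus (x : ℝ) : ℝ := max (Real.log x) 0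

/-- Euclidean distance from a real vector to the integer lattice. -/
def latticeDist {ι : Type*} [Fintype ι] (v : ι → ℝ) : ℝ :=
  ⨅ q : ι → ℤ, eNorm (fun i => v i - (q i : ℝ))

/-- The least common denominator (LCD) of a matrix `V ∈ ℝ^{m×N}`:
`D(V, L) = inf{ ‖θ‖₂ : θ ∈ ℝ^m, dist(Vᵀθ, ℤ^N) < L √(log₊(‖Vᵀθ‖₂/L)) }`. -/
def LCDmat {m N : ℕ} (V : Matrix (Fin m) (Fin N) ℝ) (L : ℝ) : ℝ :=
  sInf {r : ℝ | ∃ θ : Fin m → ℝ, r = eNorm θ ∧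
    latticeDist (V.transpose.mulVec θ) <
      L * Real.sqrt (logPlus (eNorm (V.transpose.mulVec θ) / L))}

/-- The maximal Euclidean norm of a column of `V`. -/
def maxColNorm {m N : ℕ} (V : Matrix (Fin m) (Fin N) ℝ) : ℝ :=
  ⨆ j : Fin N, eNorm fun i => V i j

lemma eNorm_nonneg {ι : Type*} [Fintype ι] (v : ι → ℝ) : 0 ≤ eNorm v :=
  Real.sqrt_nonneg _

lemma abs_le_eNorm {ι : Type*} [Fintype ι] (v : ι → ℝ) (j : ι) : |v j| ≤ eNorm v := by
  rw [← Real.sqrt_sq_eq_abs]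
  apply Real.sqrt_le_sqrt
  simp only [Real.norm_eq_abs, sq_abs]
  exact Finset.single_le_sum (f := fun i => (v i) ^ 2)
    (fun i _ => sq_nonneg _) (Finset.mem_univ j)

lemma latticeDist_nonneg {ι : Type*} [Fintype ι] (v : ι → ℝ) : 0 ≤ latticeDist v :=
  Real.iInf_nonneg fun _ => eNorm_nonneg _

lemma eNorm_pos_of_lcd_mem {ι : Type*} [Fintype ι] (v : ι → ℝ) (L : ℝ)
    (h : latticeDist v < L * Real.sqrt (logPlus (eNorm v / L))) : 0 < eNorm v := by
  rcases (eNorm_nonneg v).lt_or_eq with h' | h'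
  · exact h'
  · exfalso
    rw [← h'] at h
    simp [logPlus, Real.log_zero] at h
    exact absurd h (not_lt.2 (latticeDist_nonneg v))

/-- `√(log₊ t) ≤ t` for `t ≥ 0`. -/
lemma sqrt_logPlus_le (t : ℝ) (ht : 0 ≤ t) : Real.sqrt (logPlus t) ≤ t := by
  have h1 : logPlus t ≤ t ^ 2 := by
    rcases ht.lt_or_eq with ht' | ht'
    · have := Real.log_le_sub_one_of_pos ht'
      have h2 : t - 1 ≤ t ^ 2 := by nlinarith
      simp only [logPlus, max_le_iff]
      exact ⟨this.trans h2, by positivity⟩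
    · simp [logPlus, ← ht', Real.log_zero]
  calc Real.sqrt (logPlus t) ≤ Real.sqrt (t ^ 2) := Real.sqrt_le_sqrt h1
    _ = t := by rw [Real.sqrt_sq ht]

/-- **Simple lower bound for the LCD** (Rudelson–Vershynin, Proposition 7.4):
`D(V, L) ≥ 1 / (2 ‖V‖_∞)` where `‖V‖_∞` is the maximal column norm. -/
theorem lcd_lower_bound (m N : ℕ) (V : Matrix (Fin m) (Fin N) ℝ) (L : ℝ) (hL : 0 < L) :
    1 / (2 * maxColNorm V) ≤ LCDmat V L := by
  set S := {r : ℝ | ∃ θ : Fin m → ℝ, r = eNorm θ ∧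
    latticeDist (V.transpose.mulVec θ) <
      L * Real.sqrt (logPlus (eNorm (V.transpose.mulVec θ) / L))} with hS
  set M := maxColNorm V with hM
  rcases le_or_gt M 0 with hM0 | hM0
  · -- bound is nonpositive, and LCD is an inf of nonnegatives
    have h1 : 1 / (2 * M) ≤ 0 := by
      rcases hM0.lt_or_eq with h | h
      · apply le_of_lt; apply div_neg_of_pos_of_neg one_pos; linarith
      · have : (2:ℝ) * M = 0 := by rw [h]; ring
        rw [this]; norm_num
    refine h1.trans ?_
    rcases Set.eq_empty_or_nonempty S with hSe | hSne
    · simp [LCDmat, ← hS, hSe]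
    · apply le_csInf hSne
      rintro r ⟨θ, rfl, -⟩
      exact eNorm_nonneg θ
  -- now M > 0 : the set S is nonempty
  have hSne : S.Nonempty := by
    have hNe : Nonempty (Fin N) := by
      by_contra h
      rw [not_nonempty_iff] at h
      have : M = 0 := by rw [hM, maxColNorm]; exact Real.iSup_of_isEmpty _
      linarith
    obtain ⟨j, hj⟩ : ∃ j : Fin N, 0 < eNorm fun i => V i j := by
      by_contra h
      push_neg at h
      have : M ≤ 0 := ciSup_le fun j => h j
      linarith
    set s := eNorm fun i => V i j with hs
    have hssq : s ^ 2 = ∑ i, (V i j) ^ 2 := by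
      rw [hs, eNorm, Real.sq_sqrt (by positivity)]
      simp [Real.norm_eq_abs, sq_abs]
    set t := L * Real.exp ((N : ℝ) / (4 * L ^ 2) + 1) / s ^ 2 with ht
    have ht0 : 0 < t := by
      apply div_pos (mul_pos hL (Real.exp_pos _)) (by positivity)
    set θ := fun i => t * V i j with hθ
    set x := V.transpose.mulVec θ with hx
    have hxj : x j = t * s ^ 2 := by
      have h0 : x j = ∑ i, V i j * θ i := rfl
      rw [h0, hssq, Finset.mul_sum]
      congr 1; ext i; simp only [hθ]; ring
    have hxnorm : L * Real.exp ((N : ℝ) / (4 * L ^ 2) + 1) ≤ eNorm x := by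
      have h1 := abs_le_eNorm x j
      rw [hxj] at h1
      have h2 : t * s ^ 2 = L * Real.exp ((N : ℝ) / (4 * L ^ 2) + 1) := by
        rw [ht]; field_simp
      rw [h2, abs_of_pos (by positivity : (0:ℝ) < L * Real.exp ((N : ℝ) / (4 * L ^ 2) + 1))] at h1
      exact h1
    -- lattice distance at most √N / 2
    have hld : latticeDist x ≤ Real.sqrt N / 2 := by
      have key : eNorm (fun i => x i - ((round (x i) : ℤ) : ℝ)) ≤ Real.sqrt N / 2 := by
        rw [eNorm]
        have hsum : ∑ i, ‖x i - ((round (x i) : ℤ) : ℝ)‖ ^ 2 ≤ (N : ℝ) * (1 / 2) ^ 2 := by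
          calc ∑ i, ‖x i - ((round (x i) : ℤ) : ℝ)‖ ^ 2
              ≤ ∑ _i : Fin N, ((1:ℝ) / 2) ^ 2 := by
                apply Finset.sum_le_sum
                intro i _
                rw [Real.norm_eq_abs]
                have h := abs_sub_round (x i)
                nlinarith [abs_nonneg (x i - round (x i))]
            _ = (N : ℝ) * (1 / 2) ^ 2 := by
                rw [Finset.sum_const, Finset.card_univ, Fintype.card_fin, nsmul_eq_mul]
        calc Real.sqrt (∑ i, ‖x i - ((round (x i) : ℤ) : ℝ)‖ ^ 2)
            ≤ Real.sqrt ((N : ℝ) * (1 / 2) ^ 2) := Real.sqrt_le_sqrt hsum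
          _ = Real.sqrt N / 2 := by
              rw [Real.sqrt_mul (Nat.cast_nonneg N), Real.sqrt_sq (by norm_num : (0:ℝ) ≤ 1/2)]
              ring
      refine le_trans ?_ key
      exact ciInf_le ⟨0, fun r ⟨q, hq⟩ => hq ▸ eNorm_nonneg _⟩ (fun i => round (x i))
    -- RHS strictly bigger than √N / 2
    have hrhs : Real.sqrt N / 2 < L * Real.sqrt (logPlus (eNorm x / L)) := by
      have h1 : (N : ℝ) / (4 * L ^ 2) + 1 ≤ logPlus (eNorm x / L) := by
        have hlog : (N : ℝ) / (4 * L ^ 2) + 1 ≤ Real.log (eNorm x / L) := by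
          rw [← Real.log_exp ((N : ℝ) / (4 * L ^ 2) + 1)]
          apply Real.log_le_log (Real.exp_pos _)
          rw [le_div_iff₀ hL]
          linarith [hxnorm]
        exact hlog.trans (le_max_left _ _)
      have h2 : Real.sqrt ((N : ℝ) / (4 * L ^ 2)) < Real.sqrt (logPlus (eNorm x / L)) := by
        apply Real.sqrt_lt_sqrt (by positivity)
        linarith
      have h3 : Real.sqrt ((N : ℝ) / (4 * L ^ 2)) = Real.sqrt N / (2 * L) := by
        rw [show (4 * L ^ 2) = (2 * L) ^ 2 by ring,
          Real.sqrt_div (Nat.cast_nonneg N), Real.sqrt_sq (by linarith : (0:ℝ) ≤ 2 * L)]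
      rw [h3] at h2
      calc Real.sqrt N / 2 = L * (Real.sqrt N / (2 * L)) := by field_simp
        _ < L * Real.sqrt (logPlus (eNorm x / L)) := by
            exact mul_lt_mul_of_pos_left h2 hL
    exact ⟨eNorm θ, θ, rfl, lt_of_le_of_lt hld hrhs⟩
  -- lower bound every element of S
  apply le_csInf hSne
  rintro r ⟨θ, rfl, hθ⟩
  set x := V.transpose.mulVec θ with hx
  by_contra hcon
  push_neg at hcon
  have hθM : eNorm θ < 1 / (2 * M) := hcon
  have hxpos : 0 < eNorm x := eNorm_pos_of_lcd_mem x L hθ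
  -- each coordinate of x is < 1/2
  have hcoord : ∀ j, |x j| < 1 / 2 := by
    intro j
    have hcol : eNorm (fun i => V i j) ≤ M := by
      apply le_ciSup (f := fun j => eNorm fun i => V i j)
      exact Set.Finite.bddAbove (Set.finite_range _)
    have hCS : |x j| ≤ eNorm (fun i => V i j) * eNorm θ := by
      have h0 : x j = ∑ i, V i j * θ i := rfl
      have h1 : ∀ (f : Fin m → ℝ), ∑ i, f i * θ i ≤ eNorm f * eNorm θ := by
        intro f
        have := Real.sum_mul_le_sqrt_mul_sqrt Finset.univ f θ
        simpa [eNorm, Real.norm_eq_abs, sq_abs] using this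
      rw [h0, abs_le]
      constructor
      · have h2 := h1 (fun i => -(V i j))
        have he : eNorm (fun i => -(V i j)) = eNorm (fun i => V i j) := by
          simp [eNorm, norm_neg]
        rw [he] at h2
        simp only [neg_mul] at h2
        rw [Finset.sum_neg_distrib] at h2
        linarith
      · exact h1 _
    calc |x j| ≤ eNorm (fun i => V i j) * eNorm θ := hCS
      _ ≤ M * eNorm θ := mul_le_mul_of_nonneg_right hcol (eNorm_nonneg θ)
      _ < M * (1 / (2 * M)) := mul_lt_mul_of_pos_left hθM hM0
      _ = 1 / 2 := by
          have hMne : M ≠ 0 := ne_of_gt hM0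
          field_simp
  -- hence the closest lattice point is 0 : latticeDist x ≥ eNorm x
  have hge : eNorm x ≤ latticeDist x := by
    apply le_ciInf
    intro q
    rw [eNorm, eNorm]
    apply Real.sqrt_le_sqrt
    apply Finset.sum_le_sum
    intro i _
    rw [Real.norm_eq_abs, Real.norm_eq_abs]
    rcases eq_or_ne (q i) 0 with h | h
    · simp [h]
    · have h1 : (1 : ℝ) ≤ |((q i : ℤ) : ℝ)| := by
        rw [← Int.cast_abs]
        exact_mod_cast Int.one_le_abs h
      have h2 := hcoord i
      have h3 : |x i| ≤ |x i - (q i : ℝ)| := by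
        have h5 := abs_sub_abs_le_abs_sub ((q i : ℝ)) (x i)
        have h4 : |(q i : ℝ) - x i| = |x i - (q i : ℝ)| := abs_sub_comm _ _
        linarith
      exact pow_le_pow_left₀ (abs_nonneg _) h3 2
  -- and RHS ≤ eNorm x, contradiction
  have hle : L * Real.sqrt (logPlus (eNorm x / L)) ≤ eNorm x := by
    have h6 := sqrt_logPlus_le (eNorm x / L) (by positivity)
    calc L * Real.sqrt (logPlus (eNorm x / L)) ≤ L * (eNorm x / L) :=
          mul_le_mul_of_nonneg_left h6 hL.le
      _ = eNorm x := by field_simp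
  linarith [hθ]
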